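/- arXiv:2604.05607 — 3 statements merged into one kernel-verified Lean document; each statement's English description precedes it below -/
import Mathlib

section
/- For every integer s ≥ 2 and every integer n ≥ 1, α_s(H_2(n)) ≤ (s − 1) · 2^n / n (an inequality of real numbers). -/
open Finset

/-- The `r`-distance graph on the Boolean cube `{0,1}^n`: two vertices are adjacent
iff their Hamming distance equals `r`. -/
def cubeGraph (n r : ℕ) : SimpleGraph (Fin n → Bool) where
  Adj x y := x ≠ y ∧ hammingDist x y = r
  symm := by
    constructor
    rintro x y ⟨hne, hd⟩
    exact ⟨hne.symm, by rwa [hammingDist_comm]⟩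
  loopless := by constructor; rintro x ⟨hne, -⟩; exact hne rfl

/-- `S` is `K_s`-free in `G`: it contains no `s` pairwise adjacent vertices. -/
def IsKFree {V : Type*} (G : SimpleGraph V) (s : ℕ) (S : Finset V) : Prop :=
  ¬ ∃ T : Finset V, T ⊆ S ∧ T.card = s ∧ ∀ x ∈ T, ∀ y ∈ T, x ≠ y → G.Adj x y

/-- The `s`-independence number: the maximum size of a `K_s`-free vertex subset. -/
noncomputable def alphaS {V : Type*} [Fintype V] (G : SimpleGraph V) (s : ℕ) : ℕ :=
  sSup {m | ∃ S : Finset V, IsKFree G s S ∧ S.card = m}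

/-- The Hamming weight (number of `true` coordinates) of a vertex of the cube. -/
def wt {n : ℕ} (x : Fin n → Bool) : ℕ := (univ.filter fun i => x i = true).card

/-- The subgraph of `cubeGraph n r` induced on the `k`-th layer. -/
def layerGraph (n r k : ℕ) : SimpleGraph {x : Fin n → Bool // wt x = k} :=
  SimpleGraph.induce {x : Fin n → Bool | wt x = k} (cubeGraph n r)

/-!
If `S` is `K_s`-free in `H_2(n)`, then for every vertex `x` of the cube the elements of `S` at
distance one from `x` are pairwise at distance two, hence form a clique, so there are fewer than
`s` of them. Every vertex has exactly `n` neighbours at distance one, so double counting the pairs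
`(y, x)` with `y ∈ S` and `hammingDist y x = 1` gives `n · |S| ≤ (s - 1) · 2^n`.
-/

open Finset Function

section BoolCube

variable {ι : Type*} [Fintype ι] [DecidableEq ι]

theorem hammingDist_update_not (x : ι → Bool) (i : ι) :
    hammingDist x (update x i (!x i)) = 1 := by
  rw [hammingDist, card_eq_one]
  refine ⟨i, ?_⟩
  ext j
  by_cases h : j = i <;> simp [h]

theorem hammingDist_eq_one_iff {x y : ι → Bool} :
    hammingDist x y = 1 ↔ ∃ i, y = update x i (!x i) := by
  refine ⟨fun h => ?_, fun ⟨i, hy⟩ => hy ▸ hammingDist_update_not x i⟩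
  obtain ⟨i, hi⟩ := card_eq_one.mp h
  have hdiff : ∀ j, x j ≠ y j ↔ j = i := fun j => by
    simpa using congrArg (j ∈ ·) hi
  refine ⟨i, funext fun j => ?_⟩
  by_cases hj : j = i
  · subst hj
    simpa using (Bool.eq_not_iff.mpr ((hdiff j).mpr rfl)).symm
  · rw [update_of_ne hj]
    exact (not_not.mp (mt (hdiff j).mp hj)).symm

theorem hammingDist_update_not_update_not (x : ι → Bool) {i j : ι} (hij : i ≠ j) :
    hammingDist (update x i (!x i)) (update x j (!x j)) = 2 := by
  rw [hammingDist, ← card_pair hij]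
  congr 1
  ext k
  by_cases hi : k = i
  · subst hi; simp [hij]
  · by_cases hj : k = j
    · subst hj; simp [hi]
    · simp [hi, hj]

theorem hammingDist_eq_two_of_hammingDist_eq_one {x y z : ι → Bool}
    (hy : hammingDist y x = 1) (hz : hammingDist z x = 1) (hyz : y ≠ z) :
    hammingDist y z = 2 := by
  rw [hammingDist_comm] at hy hz
  obtain ⟨i, rfl⟩ := hammingDist_eq_one_iff.mp hy
  obtain ⟨j, rfl⟩ := hammingDist_eq_one_iff.mp hz
  exact hammingDist_update_not_update_not x fun hij => hyz (hij ▸ rfl)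

theorem card_hammingDist_eq_one (x : ι → Bool) :
    #{y | hammingDist x y = 1} = Fintype.card ι := by
  have hsphere : ({y | hammingDist x y = 1} : Finset (ι → Bool))
      = univ.image fun i => update x i (!x i) := by
    ext y
    simp only [mem_filter, mem_univ, true_and, mem_image, hammingDist_eq_one_iff]
    exact exists_congr fun _ => eq_comm
  rw [hsphere, card_image_of_injective _ fun i j hij => ?_, card_univ]
  by_contra hne
  simpa [update_of_ne (Ne.symm hne)] using congrFun hij j

end BoolCube

theorem IsKFree.card_lt {V : Type*} {G : SimpleGraph V} {s : ℕ} {S T : Finset V}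
    (hS : IsKFree G s S) (hTS : T ⊆ S) (hT : ∀ x ∈ T, ∀ y ∈ T, x ≠ y → G.Adj x y) :
    #T < s := by
  by_contra! hsT
  obtain ⟨U, hUT, hU⟩ := exists_subset_card_eq hsT
  exact hS ⟨U, hUT.trans hTS, hU, fun x hx y hy => hT x (hUT hx) y (hUT hy)⟩

theorem exists_isKFree_card_eq_alphaS {V : Type*} [Fintype V] (G : SimpleGraph V) {s : ℕ}
    (hs : s ≠ 0) : ∃ S : Finset V, IsKFree G s S ∧ #S = alphaS G s := by
  have hempty : IsKFree G s ∅ := by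
    rintro ⟨T, hT, hTs, -⟩
    rw [subset_empty.mp hT, card_empty] at hTs
    exact hs hTs.symm
  refine Nat.sSup_mem (s := {m | ∃ S : Finset V, IsKFree G s S ∧ #S = m})
    ⟨0, ∅, hempty, rfl⟩ ⟨Fintype.card V, ?_⟩
  rintro m ⟨S, -, rfl⟩
  exact card_le_univ S

namespace IsKFree

variable {n s : ℕ} {S : Finset (Fin n → Bool)}

theorem card_hammingDist_eq_one_lt (hS : IsKFree (cubeGraph n 2) s S) (x : Fin n → Bool) :
    #{y ∈ S | hammingDist y x = 1} < s := by
  refine hS.card_lt (filter_subset _ _) fun y hy z hz hyz => ⟨hyz, ?_⟩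
  exact hammingDist_eq_two_of_hammingDist_eq_one (mem_filter.mp hy).2 (mem_filter.mp hz).2 hyz

theorem card_mul_le (hS : IsKFree (cubeGraph n 2) s S) : #S * n ≤ 2 ^ n * (s - 1) := by
  have h := card_nsmul_le_card_nsmul (fun y x => hammingDist y x = 1) (s := S) (t := univ)
    (m := n) (n := s - 1)
    (fun y _ => (card_hammingDist_eq_one y).trans (Fintype.card_fin n) |>.ge)
    (fun x _ => Nat.le_sub_one_of_lt (hS.card_hammingDist_eq_one_lt x))
  simpa using h

end IsKFree

/-- **Theorem.** For every `s ≥ 2` and `n ≥ 1`,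
`α_s(H_2(n)) ≤ (s − 1) · 2^n / n`. -/
theorem stmt2 (s n : ℕ) (hs : 2 ≤ s) (hn : 1 ≤ n) :
    (alphaS (cubeGraph n 2) s : ℝ) ≤ ((s : ℝ) - 1) * 2 ^ n / n := by
  obtain ⟨S, hS, hcard⟩ := exists_isKFree_card_eq_alphaS (cubeGraph n 2) (by omega : s ≠ 0)
  have hcount : ((#S * n : ℕ) : ℝ) ≤ ((2 ^ n * (s - 1) : ℕ) : ℝ) := by
    exact_mod_cast hS.card_mul_le
  push_cast [Nat.cast_sub (by omega : 1 ≤ s), hcard] at hcount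
  rw [le_div_iff₀ (Nat.cast_pos.mpr hn)]
  linarith
end

section
/- Fix integers s ≥ 2, t ≥ 1 and k ≥ 1. For every real ε > 0 there exists M such that for every m ≥ M, setting n = 2^m − k (which is ≥ 1 for m large), one has α_s(H_{2t}(n)) ≥ (s − 1 − ε) · 2^n / n^t. -/
open Finset

/-!
Take a field `F` of order `2^m > n` and distinct nonzero locators `α_i ∈ F`. The binary BCH
syndrome `σ(x) = (∑_{x_i = 1} α_i^{2j+1})_{j<t}` separates any two vertices at Hamming distance
`2t`: in characteristic 2 the odd power sums determine all power sums up to `2t` (`p_{2j} = p_j^2`),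
and a nonzero Vandermonde determinant forbids these to vanish on `2t` distinct nonzero elements.
So `σ` is a proper colouring of `H_{2t}(n)`, and any `s - 1` colour classes span a `K_s`-free set.
Flipping coordinate `a` maps the class of `c` onto the class of `c + σ(e_a)`, so translating a
largest class (of size at least `2^n / 2^{mt}`) by `s - 1` distinct unit vectors gives `s - 1`
classes of that size. Finally `n^t / 2^{mt} → 1` for `n = 2^m - k`.
-/
theorem exists_sum_pow_ne_zero {R : Type*} [CommRing R] [IsDomain R] {S : Finset R}
    (hS : S.Nonempty) (h0 : (0 : R) ∉ S) : ∃ i ∈ Icc 1 #S, ∑ x ∈ S, x ^ i ≠ 0 := by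
  by_contra! h
  set f : Fin #S → R := fun i => (S.equivFin.symm i : R)
  have hf : Function.Injective f := Subtype.val_injective.comp S.equivFin.symm.injective
  have hsum (i : Fin #S) : ∑ j, f j * f j ^ (i : ℕ) = 0 := by
    simp_rw [← pow_succ']
    rw [← h (i + 1) (by simp), ← S.sum_coe_sort]
    exact S.equivFin.symm.sum_comp (fun x : S => (x : R) ^ ((i : ℕ) + 1))
  obtain ⟨x, hx⟩ := hS
  have := congrFun (Matrix.eq_zero_of_forall_pow_sum_mul_pow_eq_zero hf hsum) (S.equivFin ⟨x, hx⟩)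
  simp only [f, Equiv.symm_apply_apply, Pi.zero_apply] at this
  exact h0 (this ▸ hx)

theorem CharTwo.sum_pow_eq_zero_of_sum_odd_pow_eq_zero {R : Type*} [CommSemiring R] [CharP R 2]
    {S : Finset R} {t : ℕ} (h : ∀ j < t, ∑ x ∈ S, x ^ (2 * j + 1) = 0) :
    ∀ i ∈ Icc 1 (2 * t), ∑ x ∈ S, x ^ i = 0 := by
  intro i hi
  induction i using Nat.strong_induction_on with
  | _ i ih =>
    rw [mem_Icc] at hi
    obtain ⟨j, rfl | rfl⟩ := Nat.even_or_odd' i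
    · have hsq : ∑ x ∈ S, x ^ (2 * j) = (∑ x ∈ S, x ^ j) ^ 2 := by
        simp_rw [CharTwo.sum_sq, pow_mul']
      rw [hsq, ih j (by omega) (mem_Icc.2 (by omega)), zero_pow two_ne_zero]
    · exact h j (by omega)

theorem CharTwo.exists_sum_odd_pow_ne_zero {R : Type*} [CommRing R] [IsDomain R] [CharP R 2]
    {S : Finset R} {t : ℕ} (hS : S.Nonempty) (h0 : (0 : R) ∉ S) (hcard : #S ≤ 2 * t) :
    ∃ j < t, ∑ x ∈ S, x ^ (2 * j + 1) ≠ 0 := by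
  by_contra! h
  obtain ⟨i, hi, hne⟩ := exists_sum_pow_ne_zero hS h0
  exact hne (sum_pow_eq_zero_of_sum_odd_pow_eq_zero h i (Icc_subset_Icc_right hcard hi))

section Syndrome

variable {ι F : Type*} [CommRing F] (α : ι → F) (t : ℕ)

/-- The column of `a` in the parity-check matrix of the binary BCH code with locators `α` and
designed distance `2t + 1`. -/
def bchColumn (a : ι) : Fin t → F := fun j => α a ^ (2 * (j : ℕ) + 1)

theorem bchColumn_add_self [CharP F 2] (a : ι) : bchColumn α t a + bchColumn α t a = 0 :=
  funext fun _ => CharTwo.add_self_eq_zero _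

theorem bchColumn_injective {α : ι → F} (hα : Function.Injective α) (ht : 0 < t) :
    Function.Injective (bchColumn α t) := fun a b h =>
  hα (by simpa [bchColumn] using congrFun h ⟨0, ht⟩)

variable [Fintype ι]

def bchSyndrome (x : ι → Bool) : Fin t → F := ∑ i with x i, bchColumn α t i

variable [CharP F 2]

theorem bchSyndrome_sub (x y : ι → Bool) :
    bchSyndrome α t x - bchSyndrome α t y = ∑ i with x i ≠ y i, bchColumn α t i := by
  simp only [bchSyndrome, sum_filter, ← sum_sub_distrib]
  refine sum_congr rfl fun i _ => ?_
  cases x i <;> cases y i <;> simp [neg_eq_of_add_eq_zero_left (bchColumn_add_self α t i)]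

theorem bchSyndrome_update_not [DecidableEq ι] (x : ι → Bool) (a : ι) :
    bchSyndrome α t (Function.update x a !x a) = bchSyndrome α t x + bchColumn α t a := by
  have hflip : ({i | Function.update x a (!x a) i ≠ x i} : Finset ι) = {a} := by
    ext i
    by_cases hi : i = a <;> simp [hi, Function.update_of_ne]
  rw [← sub_eq_iff_eq_add', bchSyndrome_sub, hflip, sum_singleton]

variable {α} in
theorem bchSyndrome_ne_of_hammingDist_eq [IsDomain F] (hα : Function.Injective α)
    (hα0 : ∀ i, α i ≠ 0) {x y : ι → Bool} (hxy : x ≠ y) (hd : hammingDist x y = 2 * t) :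
    bchSyndrome α t x ≠ bchSyndrome α t y := by
  intro h
  classical
  set S := ({i | x i ≠ y i} : Finset ι).map ⟨α, hα⟩
  have hS : S.Nonempty := by simpa [S, ← hammingDist_pos, hammingDist] using hxy
  obtain ⟨j, hj, hne⟩ := CharTwo.exists_sum_odd_pow_ne_zero (t := t) hS (by simp [S, hα0])
    (by simp [S, ← hd, hammingDist])
  have := congrFun (bchSyndrome_sub α t x y) ⟨j, hj⟩
  rw [h, sub_self] at this
  exact hne (by simpa [S, bchColumn] using this.symm)

theorem card_bchSyndrome_fiber_add [DecidableEq ι] [DecidableEq F] (c : Fin t → F) (a : ι) :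
    #{x | bchSyndrome α t x = c + bchColumn α t a} = #{x | bchSyndrome α t x = c} := by
  refine card_nbij' (fun x => Function.update x a !x a) (fun x => Function.update x a !x a)
    ?_ ?_ ?_ ?_ <;> intro x hx
  all_goals simp_all [bchSyndrome_update_not, add_assoc, bchColumn_add_self]

variable {α} in
theorem card_bchSyndrome_mem_image [DecidableEq ι] [DecidableEq F] (hα : Function.Injective α)
    (ht : 0 < t) (c : Fin t → F) (J : Finset ι) :
    #{x | bchSyndrome α t x ∈ J.image (c + bchColumn α t ·)} =
      #J * #{x | bchSyndrome α t x = c} := by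
  set A := J.image (c + bchColumn α t ·)
  rw [card_eq_sum_card_fiberwise (s := {x | bchSyndrome α t x ∈ A}) (t := A)
    (fun x hx => (mem_filter.1 hx).2), sum_image fun a _ b _ h =>
      bchColumn_injective t hα ht (add_left_cancel h), sum_const_nat fun a ha => ?_]
  rw [filter_filter, ← card_bchSyndrome_fiber_add α t c a]
  refine congrArg card (filter_congr fun x _ => and_iff_right_of_imp fun hx => ?_)
  exact hx ▸ mem_image_of_mem _ ha

end Syndrome

theorem isKFree_of_card_image_lt {V β : Type*} [DecidableEq β] {G : SimpleGraph V} {s : ℕ}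
    (f : V → β) (hf : ∀ x y, G.Adj x y → f x ≠ f y) {S : Finset V} (hS : #(S.image f) < s) :
    IsKFree G s S := by
  rintro ⟨T, hTS, rfl, hT⟩
  have hinj : Set.InjOn f T := fun x hx y hy hxy => by
    by_contra hne
    exact hf x y (hT x hx y hy hne) hxy
  exact (card_image_of_injOn hinj ▸ card_le_card (image_subset_image hTS)).not_gt hS

theorem card_le_alphaS {V : Type*} [Fintype V] (G : SimpleGraph V) (s : ℕ) {S : Finset V}
    (h : IsKFree G s S) : #S ≤ alphaS G s :=
  le_csSup ⟨Fintype.card V, by rintro _ ⟨S, -, rfl⟩; exact S.card_le_univ⟩ ⟨S, h, rfl⟩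

theorem mul_two_pow_div_card_pow_le_alphaS_cubeGraph {F : Type*} [Field F] [Finite F] [CharP F 2]
    {n t r : ℕ} (hn : n < Nat.card F) (ht : 0 < t) (hr : r ≤ n) :
    (r : ℝ) * 2 ^ n / (Nat.card F : ℝ) ^ t ≤ alphaS (cubeGraph n (2 * t)) (r + 1) := by
  classical
  have := Fintype.ofFinite F
  obtain ⟨e⟩ : Nonempty (Fin n ↪ Fˣ) := Function.Embedding.nonempty_of_card_le <| by
    rw [Nat.card_eq_fintype_card] at hn
    rw [Fintype.card_units, Fintype.card_fin]
    omega
  set α : Fin n → F := fun i => e i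
  have hα : Function.Injective α := fun a b h => e.injective (Units.ext h)
  obtain ⟨c, hc⟩ := Fintype.exists_le_card_fiber_of_nsmul_le_card (bchSyndrome α t)
    (b := (2 : ℝ) ^ n / (Nat.card F : ℝ) ^ t) <| by
      rw [nsmul_eq_mul, Fintype.card_fun, Fintype.card_fin, ← Nat.card_eq_fintype_card]
      push_cast
      rw [mul_div_cancel₀ _ (pow_ne_zero _ (Nat.cast_ne_zero.2 Nat.card_pos.ne'))]
      simp
  obtain ⟨J, -, hJ⟩ := exists_subset_card_eq (s := (univ : Finset (Fin n))) (by simpa using hr)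
  set S := ({x | bchSyndrome α t x ∈ J.image (c + bchColumn α t ·)} : Finset (Fin n → Bool))
  have hcolouring : ∀ x y, (cubeGraph n (2 * t)).Adj x y → bchSyndrome α t x ≠ bchSyndrome α t y :=
    fun x y hxy => bchSyndrome_ne_of_hammingDist_eq t hα (fun i => (e i).ne_zero) hxy.1 hxy.2
  have hfree : IsKFree (cubeGraph n (2 * t)) (r + 1) S := by
    refine isKFree_of_card_image_lt (bchSyndrome α t) hcolouring ?_
    calc #(S.image (bchSyndrome α t)) ≤ #(J.image (c + bchColumn α t ·)) :=
          card_le_card (image_subset_iff.2 fun x hx => (mem_filter.1 hx).2)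
      _ ≤ #J := card_image_le
      _ < r + 1 := hJ ▸ r.lt_succ_self
  calc (r : ℝ) * 2 ^ n / (Nat.card F : ℝ) ^ t
      = r * ((2 : ℝ) ^ n / (Nat.card F : ℝ) ^ t) := mul_div_assoc _ _ _
    _ ≤ r * #{x | bchSyndrome α t x = c} := by gcongr
    _ = #S := by rw [card_bchSyndrome_mem_image t hα ht, hJ]; push_cast; rfl
    _ ≤ alphaS (cubeGraph n (2 * t)) (r + 1) := by exact_mod_cast card_le_alphaS _ _ hfree

open Filter Topology

theorem tendsto_two_pow_sub_div_two_pow (k : ℕ) :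
    Tendsto (fun m : ℕ => ((2 ^ m - k : ℕ) : ℝ) / 2 ^ m) atTop (𝓝 1) := by
  have hpow : Tendsto (fun m : ℕ => (2 : ℝ) ^ m) atTop atTop :=
    tendsto_pow_atTop_atTop_of_one_lt one_lt_two
  have h := (tendsto_const_nhds (x := (1 : ℝ))).sub
    ((tendsto_const_nhds (x := (k : ℝ))).div_atTop hpow)
  rw [sub_zero] at h
  refine h.congr' ?_
  filter_upwards [eventually_ge_atTop k] with m hm
  rw [Nat.cast_sub (hm.trans Nat.lt_two_pow_self.le), Nat.cast_pow, Nat.cast_ofNat, sub_div,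
    div_self (by positivity)]

/-- **Theorem.** For fixed `s ≥ 2`, `t ≥ 1`, `k ≥ 1` and every `ε > 0`, for all
sufficiently large `m`, setting `n = 2^m − k`,
`α_s(H_{2t}(n)) ≥ (s − 1 − ε) · 2^n / n^t`. -/
theorem stmt4 (s t k : ℕ) (hs : 2 ≤ s) (ht : 1 ≤ t) (hk : 1 ≤ k) :
    ∀ ε : ℝ, 0 < ε → ∃ M : ℕ, ∀ m : ℕ, M ≤ m →
      ((s : ℝ) - 1 - ε) * 2 ^ (2 ^ m - k) / ((2 ^ m - k : ℕ) : ℝ) ^ t ≤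
        (alphaS (cubeGraph (2 ^ m - k) (2 * t)) s : ℝ) := by
  intro ε hε
  have hlim : Tendsto (fun m : ℕ => ((s : ℝ) - 1) * (((2 ^ m - k : ℕ) : ℝ) / 2 ^ m) ^ t) atTop
      (𝓝 ((s : ℝ) - 1)) := by
    simpa using ((tendsto_two_pow_sub_div_two_pow k).pow t).const_mul ((s : ℝ) - 1)
  obtain ⟨M, hM⟩ := eventually_atTop.1 <|
    (hlim.eventually (lt_mem_nhds (sub_lt_self _ hε))).and (eventually_ge_atTop (s + k))
  refine ⟨M, fun m hm => ?_⟩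
  obtain ⟨hclose, hsk⟩ := hM m hm
  have hcard : Nat.card (GaloisField 2 m) = 2 ^ m := GaloisField.card 2 m (by omega)
  have hm : m < 2 ^ m := Nat.lt_two_pow_self
  set n := 2 ^ m - k with hn_def
  have hn : (0 : ℝ) < n := by exact_mod_cast (by omega : 0 < n)
  calc ((s : ℝ) - 1 - ε) * 2 ^ n / (n : ℝ) ^ t
      ≤ (s - 1) * ((n : ℝ) / 2 ^ m) ^ t * 2 ^ n / (n : ℝ) ^ t := by gcongr
    _ = ((s - 1 : ℕ) : ℝ) * 2 ^ n / (Nat.card (GaloisField 2 m) : ℝ) ^ t := by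
        rw [hcard, Nat.cast_sub (by omega : 1 ≤ s), div_pow]
        push_cast
        field_simp
    _ ≤ alphaS (cubeGraph n (2 * t)) (s - 1 + 1) :=
        mul_two_pow_div_card_pow_le_alphaS_cubeGraph (by omega) ht (by omega)
    _ = alphaS (cubeGraph n (2 * t)) s := by rw [Nat.sub_add_cancel (by omega)]
end

section
/- For all integers n ≥ 1 and t ≥ 1, the chromatic number of H_{2t}(n) satisfies χ(H_{2t}(n)) ≤ (t + 1) · max_{0 ≤ k ≤ n} χ(L_k), where L_k is the subgraph of H_{2t}(n) induced on the k-th layer. -/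
open Finset

/-!
Colour a vertex `x` of `H_{2t}(n)` by the pair `(⌊wt x / 2⌋ mod (t + 1), c_{wt x}(x))`, where
`c_k` is an optimal colouring of the layer `L_k`. Two vertices at distance `2t` have weights
of the same parity differing by at most `2t`, so their halved weights differ by at most `t`;
if they agree modulo `t + 1` the weights are equal, the vertices lie in one layer, and the
layer colouring separates them.
-/

namespace SimpleGraph

variable {V ι α : Type*} (G : SimpleGraph V) (f : V → ι) (c : V → α)

theorem colorable_card_mul_of_fibers [Fintype α] {m : ℕ}
    (hfib : ∀ i, (G.induce {v | f v = i}).Colorable m)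
    (hc : ∀ ⦃v w⦄, G.Adj v w → c v = c w → f v = f w) :
    G.Colorable (Fintype.card α * m) := by
  let C i : (G.induce {v | f v = i}).Coloring (Fin m) := (hfib i).some
  let col v : Fin m := C (f v) ⟨v, rfl⟩
  have hcol : ∀ i (u : {v | f v = i}), C i u = col u := by
    rintro _ ⟨v, rfl⟩
    rfl
  have hvalid : ∀ ⦃v w⦄, G.Adj v w → (c v, col v) ≠ (c w, col w) := by
    intro v w hvw heq
    obtain ⟨hcv, hcolv⟩ := Prod.ext_iff.mp heq
    have hfvw := hc hvw hcv
    have hadj : (G.induce {v | f v = f w}).Adj ⟨v, hfvw⟩ ⟨w, rfl⟩ := hvw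
    exact (C (f w)).valid hadj (by rw [hcol, hcol]; exact hcolv)
  simpa using (Coloring.mk _ fun h => hvalid h).colorable

theorem chromaticNumber_le_card_mul_iSup_fibers [Fintype α]
    (hc : ∀ ⦃v w⦄, G.Adj v w → c v = c w → f v = f w) :
    G.chromaticNumber ≤
      Fintype.card α * ⨆ i, (G.induce {v | f v = i}).chromaticNumber := by
  obtain hM | hM := eq_or_ne (⨆ i, (G.induce {v | f v = i}).chromaticNumber) ⊤
  · obtain _ | _ := isEmpty_or_nonempty α
    · have : IsEmpty V := c.isEmpty
      simp [chromaticNumber_eq_zero_of_isEmpty]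
    · simp [hM, ENat.mul_top]
  · obtain ⟨m, hm⟩ := ENat.ne_top_iff_exists.mp hM
    have hfib : ∀ i, (G.induce {v | f v = i}).Colorable m := fun i =>
      chromaticNumber_le_iff_colorable.mp <|
        hm ▸ le_iSup (fun i => (G.induce {v | f v = i}).chromaticNumber) i
    rw [← hm]
    exact_mod_cast (colorable_card_mul_of_fibers G f c hfib hc).chromaticNumber_le

end SimpleGraph

theorem wt_le {n : ℕ} (x : Fin n → Bool) : wt x ≤ n :=
  (card_filter_le _ _).trans (card_univ.trans (Fintype.card_fin n)).le

theorem exists_hammingDist_eq_add_and_wt_eq {n : ℕ} (x y : Fin n → Bool) :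
    ∃ p q r : ℕ, hammingDist x y = p + q ∧ wt x = r + p ∧ wt y = r + q := by
  refine ⟨#{i | x i ∧ !y i}, #{i | !x i ∧ y i}, #{i | x i ∧ y i}, ?_, ?_, ?_⟩ <;>
    simp only [hammingDist, wt, card_filter, ← sum_add_distrib] <;>
    refine sum_congr rfl fun i _ => ?_ <;> cases x i <;> cases y i <;> rfl

theorem wt_eq_of_adj_of_modEq {n t : ℕ} {x y : Fin n → Bool}
    (hxy : (cubeGraph n (2 * t)).Adj x y) (hmod : wt x / 2 ≡ wt y / 2 [MOD t + 1]) :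
    wt x = wt y := by
  obtain ⟨p, q, r, hd, hx, hy⟩ := exists_hammingDist_eq_add_and_wt_eq x y
  have h2t : p + q = 2 * t := hd ▸ hxy.2
  have := hmod.eq_of_abs_lt (by rw [abs_sub_lt_iff]; omega)
  omega

theorem iSup_layerGraph_chromaticNumber_le (n r : ℕ) :
    ⨆ k, (layerGraph n r k).chromaticNumber ≤
      (range (n + 1)).sup fun k => (layerGraph n r k).chromaticNumber := by
  refine iSup_le fun k => ?_
  obtain hk | hk := le_or_gt k n
  · exact le_sup (f := fun k => (layerGraph n r k).chromaticNumber) (mem_range_succ_iff.mpr hk)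
  · have : IsEmpty {x : Fin n → Bool // wt x = k} :=
      ⟨fun x => (wt_le x.1).not_gt (x.2.symm ▸ hk)⟩
    simp [SimpleGraph.chromaticNumber_eq_zero_of_isEmpty]

theorem stmt11_general (n t : ℕ) :
    (cubeGraph n (2 * t)).chromaticNumber ≤
      ((t : ℕ∞) + 1) *
        (Finset.range (n + 1)).sup (fun k => (layerGraph n (2 * t) k).chromaticNumber) := by
  calc (cubeGraph n (2 * t)).chromaticNumber
      ≤ Fintype.card (ZMod (t + 1)) * ⨆ k, (layerGraph n (2 * t) k).chromaticNumber :=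
        (cubeGraph n (2 * t)).chromaticNumber_le_card_mul_iSup_fibers wt
          (fun x => ((wt x / 2 : ℕ) : ZMod (t + 1)))
          fun _ _ hxy hc => wt_eq_of_adj_of_modEq hxy ((ZMod.natCast_eq_natCast_iff _ _ _).mp hc)
    _ ≤ _ := by
        rw [ZMod.card]
        push_cast
        gcongr
        exact iSup_layerGraph_chromaticNumber_le n (2 * t)

/-- **Lemma.** For all `n ≥ 1` and `t ≥ 1`,
`χ(H_{2t}(n)) ≤ (t + 1) · max_{0 ≤ k ≤ n} χ(L_k)`. -/
theorem stmt11 (n t : ℕ) (hn : 1 ≤ n) (ht : 1 ≤ t) :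
    (cubeGraph n (2 * t)).chromaticNumber ≤
      ((t : ℕ∞) + 1) *
        (Finset.range (n + 1)).sup (fun k => (layerGraph n (2 * t) k).chromaticNumber) :=
  stmt11_general n t
end
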